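/- For every N ≥ 1, the determinant of the regularized kernel matrix factors as a product over sequential posterior variances: det(K_N + σ² I_N) = ∏_{i=1}^N (σ² + σ_{i−1}²(x_i)). Equivalently, (1/2) log det(I_N + σ^{-2} K_N) = (1/2) ∑_{i=1}^N log(1 + σ^{-2} σ_{i−1}²(x_i)). -/

import Mathlib

/-!
Border `K_{n+1} + σ²I` by its leading block `K_n + σ²I`, which is positive definite. The Schur
complement of that block is the `1 × 1` matrix `κ(x_{n+1}, x_{n+1}) + σ² − k_n(x_{n+1})ᵀ
(K_n + σ²I)⁻¹ k_n(x_{n+1}) = σ² + σ_n²(x_{n+1})`, so each new point multiplies the determinant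
by that factor, and the factor is positive because both determinants are. The logarithmic form
follows from `I + σ⁻²K = σ⁻²(K + σ²I)`.
-/

open Matrix

/-- The `n × n` kernel matrix `K_n = [κ(x_i, x_j)]` built from the first `n`
points of the sequence `xs` (zero-indexed: `xs 0 = x_1`). -/
noncomputable def kerMat {D : Type*} (κ : D → D → ℝ) (xs : ℕ → D) (n : ℕ) :
    Matrix (Fin n) (Fin n) ℝ :=
  Matrix.of fun i j => κ (xs i) (xs j)

/-- The kernel vector `k_n(x) = [κ(x_i, x)]_{i=1}^n`. -/
noncomputable def kerVec {D : Type*} (κ : D → D → ℝ) (xs : ℕ → D) (n : ℕ) (y : D) :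
    Fin n → ℝ :=
  fun i => κ (xs i) y

/-- The posterior variance
`σ_n²(x) = κ(x,x) − k_n(x)ᵀ (K_n + σ² I_n)⁻¹ k_n(x)`;
for `n = 0` this is `κ(x,x)`. -/
noncomputable def postVar {D : Type*} (κ : D → D → ℝ) (xs : ℕ → D) (σ2 : ℝ)
    (n : ℕ) (y : D) : ℝ :=
  κ y y -
    kerVec κ xs n y ⬝ᵥ
      ((kerMat κ xs n + σ2 • (1 : Matrix (Fin n) (Fin n) ℝ))⁻¹ *ᵥ kerVec κ xs n y)

theorem Matrix.det_succ_eq_det_mul_schur {R : Type*} [CommRing R] {n : ℕ}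
    (M : Matrix (Fin (n + 1)) (Fin (n + 1)) R)
    (hA : IsUnit (M.submatrix Fin.castSucc Fin.castSucc).det) :
    M.det = (M.submatrix Fin.castSucc Fin.castSucc).det *
      (M (Fin.last n) (Fin.last n) -
        (fun j => M (Fin.last n) j.castSucc) ⬝ᵥ
          ((M.submatrix Fin.castSucc Fin.castSucc)⁻¹ *ᵥ fun i => M i.castSucc (Fin.last n))) := by
  have := (M.submatrix Fin.castSucc Fin.castSucc).invertibleOfIsUnitDet hA
  have h₁₁ : (M.submatrix finSumFinEquiv finSumFinEquiv).toBlocks₁₁ =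
      M.submatrix Fin.castSucc Fin.castSucc := rfl
  rw [← det_submatrix_equiv_self finSumFinEquiv M, ← fromBlocks_toBlocks (M.submatrix _ _), h₁₁,
    det_fromBlocks₁₁, invOf_eq_nonsing_inv, det_fin_one]
  simp only [sub_apply, mul_apply, dotProduct, mulVec, Finset.mul_sum, Finset.sum_mul, toBlocks₂₁,
    toBlocks₁₂, toBlocks₂₂, of_apply, submatrix_apply, finSumFinEquiv_apply_left,
    finSumFinEquiv_apply_right, mul_assoc]
  rw [Finset.sum_comm]
  rfl

theorem Matrix.det_one_add_inv_smul {n : Type*} [Fintype n] [DecidableEq n] {K : Type*} [Field K]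
    (A : Matrix n n K) {c : K} (hc : c ≠ 0) :
    (1 + c⁻¹ • A).det = c⁻¹ ^ Fintype.card n * (A + c • 1).det := by
  rw [← det_smul, smul_add, smul_smul, inv_mul_cancel₀ hc, one_smul, add_comm]

section Kernel

variable {D : Type*} (κ : D → D → ℝ) (xs : ℕ → D) (σ2 : ℝ)

theorem kerMat_add_smul_one_posDef (hσ2 : 0 < σ2) (n : ℕ) (hK : (kerMat κ xs n).PosSemidef) :
    (kerMat κ xs n + σ2 • (1 : Matrix (Fin n) (Fin n) ℝ)).PosDef :=
  PosDef.posSemidef_add hK (PosDef.one.smul hσ2)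

theorem submatrix_castSucc_kerMat_add_smul_one (n : ℕ) :
    (kerMat κ xs (n + 1) + σ2 • (1 : Matrix (Fin (n + 1)) (Fin (n + 1)) ℝ)).submatrix
        Fin.castSucc Fin.castSucc =
      kerMat κ xs n + σ2 • (1 : Matrix (Fin n) (Fin n) ℝ) := by
  ext i j
  simp [kerMat, one_apply]

theorem det_kerMat_add_smul_one_succ (hsymm : ∀ a b : D, κ a b = κ b a) (hσ2 : 0 < σ2) (n : ℕ)
    (hK : (kerMat κ xs n).PosSemidef) :
    (kerMat κ xs (n + 1) + σ2 • (1 : Matrix (Fin (n + 1)) (Fin (n + 1)) ℝ)).det =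
      (kerMat κ xs n + σ2 • (1 : Matrix (Fin n) (Fin n) ℝ)).det *
        (σ2 + postVar κ xs σ2 n (xs n)) := by
  have hA := (isUnit_iff_isUnit_det _).mp (kerMat_add_smul_one_posDef κ xs σ2 hσ2 n hK).isUnit
  rw [← submatrix_castSucc_kerMat_add_smul_one] at hA
  rw [det_succ_eq_det_mul_schur _ hA, submatrix_castSucc_kerMat_add_smul_one, postVar]
  congr 1
  have hrow : (fun j : Fin n => (kerMat κ xs (n + 1) + σ2 • 1) (Fin.last n) j.castSucc) =
      kerVec κ xs n (xs n) := by
    ext j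
    simp [kerMat, kerVec, one_apply, (Fin.castSucc_ne_last j).symm, hsymm (xs n)]
  have hcol : (fun i : Fin n => (kerMat κ xs (n + 1) + σ2 • 1) i.castSucc (Fin.last n)) =
      kerVec κ xs n (xs n) := by
    ext i
    simp [kerMat, kerVec, one_apply, Fin.castSucc_ne_last i]
  rw [hrow, hcol]
  simp only [kerMat, Matrix.add_apply, of_apply, Fin.val_last, Matrix.smul_apply, one_apply_eq,
    smul_eq_mul, mul_one]
  ring

theorem det_kerMat_add_smul_one (hsymm : ∀ a b : D, κ a b = κ b a)
    (hpsd : ∀ (n : ℕ) (z : Fin n → D), (Matrix.of fun i j => κ (z i) (z j)).PosSemidef)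
    (hσ2 : 0 < σ2) (n : ℕ) :
    (kerMat κ xs n + σ2 • (1 : Matrix (Fin n) (Fin n) ℝ)).det =
      ∏ i : Fin n, (σ2 + postVar κ xs σ2 i (xs i)) := by
  induction n with
  | zero => simp
  | succ n ih =>
    rw [det_kerMat_add_smul_one_succ κ xs σ2 hsymm hσ2 n (hpsd n _), ih, Fin.prod_univ_castSucc]
    simp

theorem add_postVar_pos (hsymm : ∀ a b : D, κ a b = κ b a)
    (hpsd : ∀ (n : ℕ) (z : Fin n → D), (Matrix.of fun i j => κ (z i) (z j)).PosSemidef)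
    (hσ2 : 0 < σ2) (n : ℕ) :
    0 < σ2 + postVar κ xs σ2 n (xs n) := by
  have hdet := (kerMat_add_smul_one_posDef κ xs σ2 hσ2 (n + 1) (hpsd _ _)).det_pos
  rw [det_kerMat_add_smul_one_succ κ xs σ2 hsymm hσ2 n (hpsd _ _)] at hdet
  exact pos_of_mul_pos_right hdet (kerMat_add_smul_one_posDef κ xs σ2 hσ2 n (hpsd _ _)).det_pos.le

end Kernel

theorem det_regularized_kernel_product_general {D : Type*}
    (κ : D → D → ℝ)
    (hsymm : ∀ a b : D, κ a b = κ b a)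
    (hpsd : ∀ (n : ℕ) (z : Fin n → D),
      (Matrix.of fun i j => κ (z i) (z j)).PosSemidef)
    (σ2 : ℝ) (hσ2 : 0 < σ2)
    (xs : ℕ → D) (N : ℕ) :
    (kerMat κ xs N + σ2 • (1 : Matrix (Fin N) (Fin N) ℝ)).det =
        ∏ i : Fin N, (σ2 + postVar κ xs σ2 i (xs i)) ∧
      (1 / 2 : ℝ) * Real.log ((1 + σ2⁻¹ • kerMat κ xs N).det) =
        (1 / 2 : ℝ) * ∑ i : Fin N, Real.log (1 + σ2⁻¹ * postVar κ xs σ2 i (xs i)) := by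
  have hprod := det_kerMat_add_smul_one κ xs σ2 hsymm hpsd hσ2 N
  have hfactor (i : Fin N) :
      σ2⁻¹ * (σ2 + postVar κ xs σ2 i (xs i)) = 1 + σ2⁻¹ * postVar κ xs σ2 i (xs i) := by
    rw [mul_add, inv_mul_cancel₀ hσ2.ne']
  refine ⟨hprod, ?_⟩
  rw [det_one_add_inv_smul _ hσ2.ne', hprod, Fintype.card_fin, ← Fin.prod_const,
    ← Finset.prod_mul_distrib, Real.log_prod]
  · simp only [hfactor]
  · intro i _
    exact (mul_pos (inv_pos.2 hσ2) (add_postVar_pos κ xs σ2 hsymm hpsd hσ2 i)).ne'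

/-- Determinant factorization over sequential posterior variances: for `N ≥ 1`,
`det(K_N + σ² I_N) = ∏_{i=1}^N (σ² + σ_{i−1}²(x_i))`, and equivalently
`(1/2) log det(I_N + σ^{-2} K_N) = (1/2) ∑_{i=1}^N log(1 + σ^{-2} σ_{i−1}²(x_i))`. -/
theorem det_regularized_kernel_product {D : Type*} [Nonempty D]
    (κ : D → D → ℝ)
    (hsymm : ∀ a b : D, κ a b = κ b a)
    (hpsd : ∀ (n : ℕ) (z : Fin n → D),
      (Matrix.of fun i j => κ (z i) (z j)).PosSemidef)
    (σ2 : ℝ) (hσ2 : 0 < σ2)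
    (xs : ℕ → D) (N : ℕ) (hN : 1 ≤ N) :
    (kerMat κ xs N + σ2 • (1 : Matrix (Fin N) (Fin N) ℝ)).det =
        ∏ i : Fin N, (σ2 + postVar κ xs σ2 i (xs i)) ∧
      (1 / 2 : ℝ) * Real.log ((1 + σ2⁻¹ • kerMat κ xs N).det) =
        (1 / 2 : ℝ) * ∑ i : Fin N, Real.log (1 + σ2⁻¹ * postVar κ xs σ2 i (xs i)) :=
  det_regularized_kernel_product_general κ hsymm hpsd σ2 hσ2 xs N
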